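/- Let L be a finite lattice with a CU-labeling λ : Cov(L) → P. The Kreweras map Kr : L → L, which sends each x ∈ L to the unique element y ∈ L with λ↑(x) = λ↓(y), is a well-defined bijection of L onto itself. -/

import Mathlib

universe u v

/-- A lattice congruence on a lattice `L`: an equivalence relation compatible with
meets and joins. -/
structure LatticeCongruence (L : Type u) [Lattice L] : Type u where
  r : L → L → Prop
  refl : ∀ x, r x x
  symm : ∀ x y, r x y → r y x
  trans : ∀ x y z, r x y → r y z → r x z
  inf_congr : ∀ x y z, r x y → r (x ⊓ z) (y ⊓ z)
  sup_congr : ∀ x y z, r x y → r (x ⊔ z) (y ⊔ z)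

namespace LatticeCongruence

variable {L : Type u} [Lattice L]

theorem ext' {c d : LatticeCongruence L} (h : ∀ x y, c.r x y ↔ d.r x y) : c = d := by
  have hr : c.r = d.r := funext fun x => funext fun y => propext (h x y)
  cases c; cases d
  subst hr
  rfl

/-- Congruences are ordered by refinement. -/
instance : PartialOrder (LatticeCongruence L) where
  le c d := ∀ x y : L, c.r x y → d.r x y
  le_refl c := fun _ _ h => h
  le_trans a b c hab hbc := fun x y h => hbc x y (hab x y h)
  le_antisymm a b hab hba := ext' fun x y => ⟨hab x y, hba x y⟩

/-- The join of two congruences. -/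
def conSup (c d : LatticeCongruence L) : LatticeCongruence L where
  r x y := ∀ e : LatticeCongruence L, c ≤ e → d ≤ e → e.r x y
  refl := fun x e _ _ => e.refl x
  symm := fun x y h e hc hd => e.symm x y (h e hc hd)
  trans := fun x y z h h' e hc hd => e.trans x y z (h e hc hd) (h' e hc hd)
  inf_congr := fun x y z h e hc hd => e.inf_congr x y z (h e hc hd)
  sup_congr := fun x y z h e hc hd => e.sup_congr x y z (h e hc hd)

/-- The meet of two congruences (their intersection). -/
def conInf (c d : LatticeCongruence L) : LatticeCongruence L where
  r x y := c.r x y ∧ d.r x y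
  refl := fun x => ⟨c.refl x, d.refl x⟩
  symm := fun x y h => ⟨c.symm x y h.1, d.symm x y h.2⟩
  trans := fun x y z h h' => ⟨c.trans x y z h.1 h'.1, d.trans x y z h.2 h'.2⟩
  inf_congr := fun x y z h => ⟨c.inf_congr x y z h.1, d.inf_congr x y z h.2⟩
  sup_congr := fun x y z h => ⟨c.sup_congr x y z h.1, d.sup_congr x y z h.2⟩

/-- The lattice `Con(L)` of congruences of `L`. -/
instance : Lattice (LatticeCongruence L) where
  sup := conSup
  le_sup_left c d := fun x y h e hc _ => hc x y h
  le_sup_right c d := fun x y h e _ hd => hd x y h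
  sup_le a b c hac hbc := fun x y h => h c hac hbc
  inf := conInf
  inf_le_left c d := fun _ _ h => h.1
  inf_le_right c d := fun _ _ h => h.2
  le_inf a b c hab hac := fun x y h => ⟨hab x y h, hac x y h⟩

/-- `conGen a b` is the finest lattice congruence identifying `a` and `b`. -/
def conGen (a b : L) : LatticeCongruence L where
  r x y := ∀ e : LatticeCongruence L, e.r a b → e.r x y
  refl := fun x e _ => e.refl x
  symm := fun x y h e he => e.symm x y (h e he)
  trans := fun x y z h h' e he => e.trans x y z (h e he) (h' e he)
  inf_congr := fun x y z h e he => e.inf_congr x y z (h e he)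
  sup_congr := fun x y z h e he => e.sup_congr x y z (h e he)

/-- The setoid underlying a lattice congruence. -/
def setoid (c : LatticeCongruence L) : Setoid L :=
  ⟨c.r, ⟨c.refl, fun h => c.symm _ _ h, fun h h' => c.trans _ _ _ h h'⟩⟩

/-- The quotient of `L` by a lattice congruence. -/
def Quo (c : LatticeCongruence L) : Type u := Quotient c.setoid

/-- The canonical quotient map `L → L/Θ`. -/
def mkQ (c : LatticeCongruence L) (x : L) : c.Quo := Quotient.mk c.setoid x

variable (c : LatticeCongruence L)

theorem sup_congr₂ {x x' y y' : L} (hx : c.r x x') (hy : c.r y y') :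
    c.r (x ⊔ y) (x' ⊔ y') := by
  have h1 : c.r (x ⊔ y) (x' ⊔ y) := c.sup_congr x x' y hx
  have h2 : c.r (y ⊔ x') (y' ⊔ x') := c.sup_congr y y' x' hy
  rw [sup_comm y x', sup_comm y' x'] at h2
  exact c.trans _ _ _ h1 h2

theorem inf_congr₂ {x x' y y' : L} (hx : c.r x x') (hy : c.r y y') :
    c.r (x ⊓ y) (x' ⊓ y') := by
  have h1 : c.r (x ⊓ y) (x' ⊓ y) := c.inf_congr x x' y hx
  have h2 : c.r (y ⊓ x') (y' ⊓ x') := c.inf_congr y y' x' hy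
  rw [inf_comm y x', inf_comm y' x'] at h2
  exact c.trans _ _ _ h1 h2

instance : Max c.Quo :=
  ⟨Quotient.lift₂ (fun x y => c.mkQ (x ⊔ y))
    (fun _ _ _ _ hx hy => Quotient.sound (c.sup_congr₂ hx hy))⟩

instance : Min c.Quo :=
  ⟨Quotient.lift₂ (fun x y => c.mkQ (x ⊓ y))
    (fun _ _ _ _ hx hy => Quotient.sound (c.inf_congr₂ hx hy))⟩

theorem quo_sup_comm (a b : c.Quo) : a ⊔ b = b ⊔ a :=
  Quotient.inductionOn₂ a b fun x y => congrArg (Quotient.mk c.setoid) (sup_comm x y)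

theorem quo_sup_assoc (a b d : c.Quo) : a ⊔ b ⊔ d = a ⊔ (b ⊔ d) :=
  Quotient.inductionOn₃ a b d fun x y z => congrArg (Quotient.mk c.setoid) (sup_assoc x y z)

theorem quo_inf_comm (a b : c.Quo) : a ⊓ b = b ⊓ a :=
  Quotient.inductionOn₂ a b fun x y => congrArg (Quotient.mk c.setoid) (inf_comm x y)

theorem quo_inf_assoc (a b d : c.Quo) : a ⊓ b ⊓ d = a ⊓ (b ⊓ d) :=
  Quotient.inductionOn₃ a b d fun x y z => congrArg (Quotient.mk c.setoid) (inf_assoc x y z)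

theorem quo_sup_inf_self (a b : c.Quo) : a ⊔ a ⊓ b = a :=
  Quotient.inductionOn₂ a b fun x y =>
    congrArg (Quotient.mk c.setoid) (sup_inf_self (a := x) (b := y))

theorem quo_inf_sup_self (a b : c.Quo) : a ⊓ (a ⊔ b) = a :=
  Quotient.inductionOn₂ a b fun x y =>
    congrArg (Quotient.mk c.setoid) (inf_sup_self (a := x) (b := y))

/-- The quotient lattice `L/Θ`. -/
instance : Lattice c.Quo :=
  Lattice.mk' c.quo_sup_comm c.quo_sup_assoc c.quo_inf_comm c.quo_inf_assoc
    c.quo_sup_inf_self c.quo_inf_sup_self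

end LatticeCongruence

open LatticeCongruence in
/-- A finite lattice is congruence-uniform if `j ↦ con(j₊, j)` is a bijection from
join-irreducibles of `L` onto join-irreducibles of `Con(L)`, and dually
`m ↦ con(m, m⁺)` is a bijection from meet-irreducibles of `L` onto
meet-irreducibles of `Con(L)`. -/
def IsCongruenceUniform (L : Type u) [Lattice L] : Prop :=
  (∀ j : L, SupIrred j → ∀ a : L, a ⋖ j → SupIrred (conGen a j)) ∧
  (∀ j j' a a' : L, SupIrred j → SupIrred j' → a ⋖ j → a' ⋖ j' →
      conGen a j = conGen a' j' → j = j') ∧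
  (∀ Θ : LatticeCongruence L, SupIrred Θ → ∃ j a : L, SupIrred j ∧ a ⋖ j ∧ conGen a j = Θ) ∧
  (∀ m : L, InfIrred m → ∀ b : L, m ⋖ b → InfIrred (conGen m b)) ∧
  (∀ m m' b b' : L, InfIrred m → InfIrred m' → m ⋖ b → m' ⋖ b' →
      conGen m b = conGen m' b' → m = m') ∧
  (∀ Θ : LatticeCongruence L, InfIrred Θ → ∃ m b : L, InfIrred m ∧ m ⋖ b ∧ conGen m b = Θ)

/-- `C` is a maximal chain of the closed interval `[a, b]`. -/
def IsMaxChainIn {L : Type u} [Lattice L] (a b : L) (C : Set L) : Prop :=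
  C ⊆ Set.Icc a b ∧ IsChain (· ≤ ·) C ∧
    ∀ D : Set L, D ⊆ Set.Icc a b → IsChain (· ≤ ·) D → C ⊆ D → C = D

/-- `u` and `v` are consecutive elements of the chain `C` (the covering pairs of `C`
viewed as a poset in its own right). -/
def ConsecIn {L : Type u} [Lattice L] (C : Set L) (u v : L) : Prop :=
  u ∈ C ∧ v ∈ C ∧ u < v ∧ ∀ w ∈ C, ¬(u < w ∧ w < v)

/-- `lam` is a CN-labeling of the lattice `L` (with values in the poset `P`):
the defining conditions (CN1), (CN2), (CN3) hold in `L` and in its order-dual. -/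
def IsCNLabeling {L : Type u} [Lattice L] {P : Type v} [PartialOrder P]
    (lam : L → L → P) : Prop :=
  (∀ x y z : L, x ≠ y → z ⋖ x → z ⋖ y →
    ∀ C₁ C₂ : Set L, IsMaxChainIn z (x ⊔ y) C₁ → IsMaxChainIn z (x ⊔ y) C₂ →
      x ∈ C₁ → y ∈ C₂ →
      (∀ x' ∈ C₁, x' ⋖ (x ⊔ y) → lam x' (x ⊔ y) = lam z y) ∧
      (∀ y' ∈ C₂, y' ⋖ (x ⊔ y) → lam y' (x ⊔ y) = lam z x) ∧
      (∀ u v : L, ConsecIn C₁ u v → z < u → v < x ⊔ y →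
        lam z x < lam u v ∧ lam z y < lam u v) ∧
      (∀ u v u' v' : L, ConsecIn C₁ u v → ConsecIn C₁ u' v' →
        lam u v = lam u' v' → u = u' ∧ v = v')) ∧
  (∀ x y z : L, x ≠ y → x ⋖ z → y ⋖ z →
    ∀ C₁ C₂ : Set L, IsMaxChainIn (x ⊓ y) z C₁ → IsMaxChainIn (x ⊓ y) z C₂ →
      x ∈ C₁ → y ∈ C₂ →
      (∀ x' ∈ C₁, (x ⊓ y) ⋖ x' → lam (x ⊓ y) x' = lam y z) ∧
      (∀ y' ∈ C₂, (x ⊓ y) ⋖ y' → lam (x ⊓ y) y' = lam x z) ∧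
      (∀ u v : L, ConsecIn C₁ u v → x ⊓ y < u → v < z →
        lam x z < lam u v ∧ lam y z < lam u v) ∧
      (∀ u v u' v' : L, ConsecIn C₁ u v → ConsecIn C₁ u' v' →
        lam u v = lam u' v' → u = u' ∧ v = v'))

/-- `lam` is a CU-labeling of the lattice `L`: a CN-labeling satisfying (CU1), (CU2). -/
def IsCULabeling {L : Type u} [Lattice L] {P : Type v} [PartialOrder P]
    (lam : L → L → P) : Prop :=
  IsCNLabeling lam ∧
  (∀ j j' a a' : L, SupIrred j → SupIrred j' → a ⋖ j → a' ⋖ j' → j ≠ j' →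
    lam a j ≠ lam a' j') ∧
  (∀ m m' b b' : L, InfIrred m → InfIrred m' → m ⋖ b → m' ⋖ b' → m ≠ m' →
    lam m b ≠ lam m' b')

/-- `λ↓(x)`: the set of labels of covering pairs below `x`. -/
def lamDown {L : Type u} [Lattice L] {P : Type v} (lam : L → L → P) (x : L) : Set P :=
  {p | ∃ y, y ⋖ x ∧ lam y x = p}

/-- `λ↑(x)`: the set of labels of covering pairs above `x`. -/
def lamUp {L : Type u} [Lattice L] {P : Type v} (lam : L → L → P) (x : L) : Set P :=
  {p | ∃ y, x ⋖ y ∧ lam x y = p}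

/-- Covering pairs `(x, y)` and `(w, z)` are associates. -/
def AreAssociates {L : Type u} [Lattice L] (x y w z : L) : Prop :=
  (y ⊓ w = x ∧ y ⊔ w = z) ∨ (x ⊓ z = w ∧ x ⊔ z = y)

/-- `x = ⋁ A` is the canonical join-representation of `x`. -/
def IsCanonicalJoinRep {L : Type u} [Lattice L] (A : Set L) (x : L) : Prop :=
  (∀ a ∈ A, SupIrred a) ∧ IsLUB A x ∧ (∀ B ⊂ A, ¬IsLUB B x) ∧
    ∀ B : Set L, (∀ b ∈ B, SupIrred b) → IsLUB B x → (∀ B' ⊂ B, ¬IsLUB B' x) →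
      ∀ a ∈ A, ∃ b ∈ B, a ≤ b

/-- `x = ⋀ A` is the canonical meet-representation of `x`. -/
def IsCanonicalMeetRep {L : Type u} [Lattice L] (A : Set L) (x : L) : Prop :=
  (∀ a ∈ A, InfIrred a) ∧ IsGLB A x ∧ (∀ B ⊂ A, ¬IsGLB B x) ∧
    ∀ B : Set L, (∀ b ∈ B, InfIrred b) → IsGLB B x → (∀ B' ⊂ B, ¬IsGLB B' x) →
      ∀ a ∈ A, ∃ b ∈ B, b ≤ a

/-!
By (CN1) and induction, every cover `w ⋖ y` carries the label of a join-irreducible `j ≤ y`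
with `j_* ≤ w` and `j ≰ w`, and by (CU1) this `j` is determined by the label. Hence `λ↓` is
injective, and dually so is `λ↑`.

Given `x`, choose such a `j_v` for every upper cover `x ⋖ v` and put `y = ⋁ j_v`. Comparing labels
by (CN1) and (CN2) shows that every maximal element above `(j_v)_*` and not above `j_v` is
meet-irreducible with the label of `(j_v)_* ⋖ j_v`, so by (CU2) there is a greatest one, `κ_v`.
The lower covers of `y` are then exactly the `κ_v ⊓ y ⋖ y`, labelled `λ(x, v)`; so
`λ↓(y) = λ↑(x)`, and `x ↦ y` is a bijection because `λ↑` is injective and `L` is finite.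
-/

open OrderDual

section Lattice

variable {L : Type*} [Lattice L] {a j t w y T b : L}

lemma supIrred_of_forall_lt_le (hwy : w < y) (h : ∀ c < y, c ≤ w) : SupIrred y :=
  ⟨fun hmin => hwy.not_ge (hmin hwy.le), fun c d hcd => by
    by_contra! hne
    refine hwy.not_ge (hcd ▸ sup_le (h c ?_) (h d ?_))
    · exact lt_of_le_of_ne (hcd ▸ le_sup_left) hne.1
    · exact lt_of_le_of_ne (hcd ▸ le_sup_right) hne.2⟩

lemma infIrred_of_forall_lt_le (hTb : T < b) (h : ∀ c, T < c → b ≤ c) : InfIrred T :=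
  supIrred_toDual.1 (supIrred_of_forall_lt_le (L := Lᵒᵈ) (w := toDual b) hTb h)

lemma SupIrred.le_of_lt_of_covBy (hj : SupIrred j) (ha : a ⋖ j) (ht : t < j) : t ≤ a := by
  rcases ha.eq_or_eq le_sup_right (sup_le ht.le ha.le) with h | h
  · exact h ▸ le_sup_left
  · exact ((hj.2 h).elim ht.ne ha.lt.ne).elim

lemma covBy_sup_of_maximal (hT : Maximal (fun t => ¬ j ≤ t) T) : T ⋖ T ⊔ j :=
  ⟨left_lt_sup.2 hT.1, fun _ hTc hcj =>
    hTc.not_ge (hT.2 (fun hjc => hcj.not_ge (sup_le hTc.le hjc)) hTc.le)⟩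

lemma infIrred_of_maximal (hT : Maximal (fun t => ¬ j ≤ t) T) : InfIrred T :=
  infIrred_of_forall_lt_le (covBy_sup_of_maximal hT).lt fun _ hTc =>
    sup_le hTc.le (not_not.1 fun hjc => hTc.not_ge (hT.2 hjc hTc.le))

lemma le_of_isGreatest_of_le_covBy {x v w a j j' K : L} (hv : x ⋖ v) (hw : x ⋖ w) (hvw : v ≠ w)
    (hjv : j ≤ v) (hjx : ¬ j ≤ x) (hax : a ≤ x) (hj'w : j' ≤ w)
    (hK : IsGreatest {t | a ≤ t ∧ ¬ j ≤ t} K) : j' ≤ K :=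
  le_sup_left.trans (hK.2 ⟨le_sup_right, fun hj => hjx (hv.wcovBy.inf_eq hw.wcovBy hvw ▸
    le_inf hjv (hj.trans (sup_le hj'w (hax.trans hw.le))))⟩ : j' ⊔ a ≤ K)

lemma exists_isMaxChainIn_superset [Finite L] {a b : L} {C : Set L} (hC : IsChain (· ≤ ·) C)
    (hCab : C ⊆ Set.Icc a b) : ∃ D, IsMaxChainIn a b D ∧ C ⊆ D := by
  obtain ⟨D, hCD, hD⟩ :=
    Finite.exists_le_maximal (p := fun D : Set L => D ⊆ Set.Icc a b ∧ IsChain (· ≤ ·) D) ⟨hCab, hC⟩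
  exact ⟨D, ⟨hD.1.1, hD.1.2, fun E hE hEc hDE => le_antisymm hDE (hD.2 ⟨hE, hEc⟩ hDE)⟩, hCD⟩

end Lattice

section Duality

variable {L : Type*} [Lattice L] {P : Type*}

/-- (CN) and (CU) are self-dual: the cover `b ⋖ a` of `Lᵒᵈ` is labelled like the cover `a ⋖ b`
of `L`. -/
def dualLabel (lam : L → L → P) : Lᵒᵈ → Lᵒᵈ → P := fun a b => lam (ofDual b) (ofDual a)

lemma IsMaxChainIn.ofDual {a b : Lᵒᵈ} {C : Set Lᵒᵈ} (h : IsMaxChainIn a b C) :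
    IsMaxChainIn (ofDual b) (ofDual a) (toDual ⁻¹' C) :=
  ⟨fun _ hx => (h.1 hx).symm, h.2.1.symm,
    fun D hD hDc hCD => h.2.2 (OrderDual.ofDual ⁻¹' D) (fun _ hx => (hD hx).symm) hDc.symm hCD⟩

lemma ConsecIn.ofDual {C : Set Lᵒᵈ} {u v : Lᵒᵈ} (h : ConsecIn C u v) :
    ConsecIn (toDual ⁻¹' C) (ofDual v) (ofDual u) :=
  ⟨h.2.1, h.1, h.2.2.1, fun w hw hw' => h.2.2.2 w hw hw'.symm⟩

lemma lamDown_dualLabel (lam : L → L → P) (x : L) :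
    lamDown (dualLabel lam) (toDual x) = lamUp lam x :=
  Set.ext fun _ => ⟨fun ⟨w, hw, h⟩ => ⟨ofDual w, hw.ofDual, h⟩,
    fun ⟨w, hw, h⟩ => ⟨toDual w, hw.toDual, h⟩⟩

variable [PartialOrder P] {lam : L → L → P}

lemma IsCNLabeling.dual (h : IsCNLabeling lam) : IsCNLabeling (dualLabel lam) := by
  refine ⟨fun x y z hxy h₁ h₂ C₁ C₂ hC₁ hC₂ hx hy => ?_,
    fun x y z hxy h₁ h₂ C₁ C₂ hC₁ hC₂ hx hy => ?_⟩
  · obtain ⟨h1, h2, h3, h4⟩ := h.2 _ _ _ hxy h₁.ofDual h₂.ofDual _ _ hC₁.ofDual hC₂.ofDual hx hy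
    exact ⟨fun x' hx' hcov => h1 x' hx' hcov.ofDual, fun y' hy' hcov => h2 y' hy' hcov.ofDual,
      fun u v huv hzu hvs => h3 _ _ huv.ofDual hvs hzu,
      fun u v u' v' huv hu'v' hl => (h4 _ _ _ _ huv.ofDual hu'v'.ofDual hl).symm⟩
  · obtain ⟨h1, h2, h3, h4⟩ := h.1 _ _ _ hxy h₁.ofDual h₂.ofDual _ _ hC₁.ofDual hC₂.ofDual hx hy
    exact ⟨fun x' hx' hcov => h1 x' hx' hcov.ofDual, fun y' hy' hcov => h2 y' hy' hcov.ofDual,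
      fun u v huv hzu hvs => h3 _ _ huv.ofDual hvs hzu,
      fun u v u' v' huv hu'v' hl => (h4 _ _ _ _ huv.ofDual hu'v'.ofDual hl).symm⟩

lemma IsCULabeling.dual (h : IsCULabeling lam) : IsCULabeling (dualLabel lam) :=
  ⟨h.1.dual, fun _ _ _ _ hj hj' ha ha' => h.2.2 _ _ _ _ hj hj' ha.ofDual ha'.ofDual,
    fun _ _ _ _ hm hm' hb hb' => h.2.1 _ _ _ _ hm hm' hb.ofDual hb'.ofDual⟩

end Duality

variable {L : Type*} [Lattice L] {P : Type*} [PartialOrder P] {lam : L → L → P}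

namespace IsCULabeling

lemma supIrred_eq_of_label_eq (h : IsCULabeling lam) {j j' a a' : L} (hj : SupIrred j)
    (hj' : SupIrred j') (ha : a ⋖ j) (ha' : a' ⋖ j') (hl : lam a j = lam a' j') : j = j' :=
  by_contra fun hne => h.2.1 j j' a a' hj hj' ha ha' hne hl

lemma infIrred_eq_of_label_eq (h : IsCULabeling lam) {m m' b b' : L} (hm : InfIrred m)
    (hm' : InfIrred m') (hb : m ⋖ b) (hb' : m' ⋖ b') (hl : lam m b = lam m' b') : m = m' :=
  by_contra fun hne => h.2.2 m m' b b' hm hm' hb hb' hne hl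

end IsCULabeling

variable [Finite L]

namespace IsCNLabeling

lemma cn_of_inf_le_covBy_le (h : IsCNLabeling lam) {x y z u v : L} (hxz : x ⋖ z) (hyz : y ⋖ z)
    (hxy : x ≠ y) (hu : x ⊓ y ≤ u) (huv : u ⋖ v) (hvx : v ≤ x) :
    (x ⊓ y = u → lam u v = lam y z) ∧ (x ⊓ y < u → lam y z < lam u v) := by
  have := huv.le
  have := hxz.le
  have := hyz.le
  have : x ⊓ y ≤ y := inf_le_right
  obtain ⟨C₁, hC₁, hsub₁⟩ :=
    exists_isMaxChainIn_superset (a := x ⊓ y) (b := z) (C := {x ⊓ y, u, v, x, z})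
    (by rintro p (rfl | rfl | rfl | rfl | rfl) q (rfl | rfl | rfl | rfl | rfl) - <;> order)
    (by rintro p (rfl | rfl | rfl | rfl | rfl) <;> constructor <;> order)
  obtain ⟨C₂, hC₂, hsub₂⟩ := exists_isMaxChainIn_superset (a := x ⊓ y) (b := z) (C := {x ⊓ y, y, z})
    (by rintro p (rfl | rfl | rfl) q (rfl | rfl | rfl) - <;> order)
    (by rintro p (rfl | rfl | rfl) <;> constructor <;> order)
  obtain ⟨h1, -, h2, -⟩ := h.2 x y z hxy hxz hyz C₁ C₂ hC₁ hC₂ (hsub₁ (by simp)) (hsub₂ (by simp))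
  refine ⟨fun e => ?_, fun hlt => (h2 u v ?_ hlt (hvx.trans_lt hxz.lt)).2⟩
  · subst e
    exact h1 v (hsub₁ (by simp)) huv
  · exact ⟨hsub₁ (by simp), hsub₁ (by simp), huv.lt, fun w _ hw => huv.2 hw.1 hw.2⟩

lemma label_inf_covBy_eq (h : IsCNLabeling lam) {x y z c : L} (hxz : x ⋖ z) (hyz : y ⋖ z)
    (hxy : x ≠ y) (hc : x ⊓ y ⋖ c) (hcx : c ≤ x) : lam (x ⊓ y) c = lam y z :=
  (h.cn_of_inf_le_covBy_le hxz hyz hxy le_rfl hc hcx).1 rfl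

lemma label_le_of_inf_le (h : IsCNLabeling lam) {x y z u v : L} (hxz : x ⋖ z) (hyz : y ⋖ z)
    (hxy : x ≠ y) (hu : x ⊓ y ≤ u) (huv : u ⋖ v) (hvx : v ≤ x) : lam y z ≤ lam u v :=
  hu.eq_or_lt.elim (fun e => ((h.cn_of_inf_le_covBy_le hxz hyz hxy hu huv hvx).1 e).ge)
    fun hlt => ((h.cn_of_inf_le_covBy_le hxz hyz hxy hu huv hvx).2 hlt).le

lemma exists_supIrred_label_eq (h : IsCNLabeling lam) {w y : L} (hwy : w ⋖ y) :
    ∃ j a, SupIrred j ∧ a ⋖ j ∧ j ≤ y ∧ ¬ j ≤ w ∧ a ≤ w ∧ lam a j = lam w y := by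
  induction y using WellFoundedLT.induction generalizing w with
  | _ y ih =>
  by_cases hy : ∀ c < y, c ≤ w
  · exact ⟨y, w, supIrred_of_forall_lt_le hwy.lt hy, hwy, le_rfl, hwy.lt.not_ge, le_rfl, rfl⟩
  -- otherwise another lower cover `w'` of `y` exists, and by (CN1) the atoms of `[w' ⊓ w, w']`
  -- carry the label of `w ⋖ y`
  push Not at hy
  obtain ⟨c, hcy, hcw⟩ := hy
  obtain ⟨w', hcw', hw'y⟩ := exists_le_covBy_of_lt hcy
  have hne : w' ≠ w := fun e => hcw (e ▸ hcw')
  have hlt : w' ⊓ w < w' :=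
    inf_lt_left.2 fun hle => hne ((hw'y.eq_or_eq hle hwy.le).resolve_right hwy.lt.ne).symm
  obtain ⟨a₀, ha₀, ha₀w'⟩ := exists_covBy_le_of_lt hlt
  obtain ⟨j, a, hj, ha, hja₀, hjq, haq, hl⟩ := ih a₀ (ha₀w'.trans_lt hw'y.lt) ha₀
  exact ⟨j, a, hj, ha, hja₀.trans (ha₀w'.trans hw'y.le),
    fun hjw => hjq (le_inf (hja₀.trans ha₀w') hjw), haq.trans inf_le_right,
    hl.trans (h.label_inf_covBy_eq hw'y hwy hne ha₀ ha₀w')⟩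

lemma label_le_of_supIrred (h : IsCNLabeling lam) {m y j a : L} (hmy : m ⋖ y) (hj : SupIrred j)
    (ha : a ⋖ j) (hjy : j ≤ y) (hjm : ¬ j ≤ m) (ham : a ≤ m) : lam m y ≤ lam a j := by
  induction y using WellFoundedLT.induction generalizing m with
  | _ y ih =>
  rcases hjy.eq_or_lt with rfl | hjy
  · rw [le_antisymm (hj.le_of_lt_of_covBy ha hmy.lt) ham]
  obtain ⟨w, hjw, hwy⟩ := exists_le_covBy_of_lt hjy
  have hwm : w ≠ m := fun e => hjm (e ▸ hjw)
  have hjq : ¬ j ≤ w ⊓ m := fun hq => hjm (hq.trans inf_le_right)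
  -- a cover below `w ⊓ m ⊔ j` inside `[w ⊓ m, w]` has a label `≥ lam m y` by (CN1)/(CN2)
  obtain ⟨c, hqc, hcz⟩ := exists_le_covBy_of_lt (left_lt_sup.2 hjq)
  have hzw : w ⊓ m ⊔ j ≤ w := sup_le inf_le_left hjw
  calc lam m y ≤ lam c (w ⊓ m ⊔ j) := h.label_le_of_inf_le hwy hmy hwm hqc hcz hzw
    _ ≤ lam a j := ih _ (hzw.trans_lt hwy.lt) hcz le_sup_right
        (fun hjc => hcz.lt.not_ge (sup_le hqc hjc)) ((le_inf (ha.le.trans hjw) ham).trans hqc)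

lemma label_le_of_infIrred (h : IsCNLabeling lam) {x v m b : L} (hxv : x ⋖ v) (hm : InfIrred m)
    (hmb : m ⋖ b) (hxm : x ≤ m) (hvm : ¬ v ≤ m) (hvb : v ≤ b) : lam x v ≤ lam m b :=
  h.dual.label_le_of_supIrred (L := Lᵒᵈ) (m := toDual v) (y := toDual x)
    hxv.toDual (supIrred_toDual.2 hm) hmb.toDual hxm hvm hvb

lemma label_sup_eq_of_maximal (h : IsCNLabeling lam) {j a T : L} (hj : SupIrred j) (ha : a ⋖ j)
    (haT : a ≤ T) (hT : Maximal (fun t => ¬ j ≤ t) T) : lam T (T ⊔ j) = lam a j :=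
  le_antisymm (h.label_le_of_supIrred (covBy_sup_of_maximal hT) hj ha le_sup_right hT.1 haT)
    (h.label_le_of_infIrred ha (infIrred_of_maximal hT) (covBy_sup_of_maximal hT) haT hT.1
      le_sup_right)

end IsCNLabeling

namespace IsCULabeling

lemma le_of_lamDown_subset (h : IsCULabeling lam) {y y' : L}
    (hyy' : lamDown lam y ⊆ lamDown lam y') : y ≤ y' := by
  by_contra hle
  obtain ⟨w, hw, hwy⟩ := exists_le_covBy_of_lt (inf_lt_left.2 hle)
  obtain ⟨j, a, hj, ha, hjy, hjw, -, hl⟩ := h.1.exists_supIrred_label_eq hwy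
  obtain ⟨w', hw'y', hl'⟩ := hyy' ⟨w, hwy, rfl⟩
  obtain ⟨j', a', hj', ha', hj'y', -, -, hl''⟩ := h.1.exists_supIrred_label_eq hw'y'
  have hjj' : j = j' := h.supIrred_eq_of_label_eq hj hj' ha ha' (by rw [hl, hl'', hl'])
  exact hjw ((le_inf hjy (hjj' ▸ hj'y')).trans hw)

lemma lamDown_injective (h : IsCULabeling lam) : Function.Injective (lamDown lam) :=
  fun _ _ hyy' => le_antisymm (h.le_of_lamDown_subset hyy'.le) (h.le_of_lamDown_subset hyy'.ge)

lemma lamUp_injective (h : IsCULabeling lam) : Function.Injective (lamUp lam) := fun x x' hxx' =>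
  toDual.injective (h.dual.lamDown_injective (by rw [lamDown_dualLabel, lamDown_dualLabel, hxx']))

lemma le_of_label_eq (h : IsCULabeling lam) {w₁ w₂ y j a : L} (h₁ : w₁ ⋖ y) (h₂ : w₂ ⋖ y)
    (hne : w₁ ≠ w₂) (hj : SupIrred j) (ha : a ⋖ j) (hl : lam a j = lam w₁ y) : j ≤ w₂ := by
  have hlt : w₂ ⊓ w₁ < w₂ :=
    inf_lt_left.2 fun hle => hne ((h₂.eq_or_eq hle h₁.le).resolve_right h₁.lt.ne)
  obtain ⟨c, hc, hcw⟩ := exists_covBy_le_of_lt hlt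
  obtain ⟨j', a', hj', ha', hj'c, -, -, hl'⟩ := h.1.exists_supIrred_label_eq hc
  have hjj' : j' = j := h.supIrred_eq_of_label_eq hj' hj ha' ha
    (hl'.trans ((h.1.label_inf_covBy_eq h₂ h₁ hne.symm hc hcw).trans hl.symm))
  exact hjj' ▸ hj'c.trans hcw

lemma exists_isGreatest_not_le (h : IsCULabeling lam) {j a : L} (hj : SupIrred j) (ha : a ⋖ j) :
    ∃ K, IsGreatest {t | a ≤ t ∧ ¬ j ≤ t} K := by
  obtain ⟨K, haK, hK⟩ := Finite.exists_le_maximal (p := fun t => ¬ j ≤ t) ha.lt.not_ge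
  refine ⟨K, ⟨haK, hK.1⟩, fun t ⟨hat, hjt⟩ => ?_⟩
  obtain ⟨T, htT, hT⟩ := Finite.exists_le_maximal (p := fun t => ¬ j ≤ t) hjt
  have hTK : T = K := h.infIrred_eq_of_label_eq (infIrred_of_maximal hT) (infIrred_of_maximal hK)
    (covBy_sup_of_maximal hT) (covBy_sup_of_maximal hK)
    (by rw [h.1.label_sup_eq_of_maximal hj ha (hat.trans htT) hT,
      h.1.label_sup_eq_of_maximal hj ha haK hK])
  exact hTK ▸ htT

lemma inf_covBy_of_isGreatest (h : IsCULabeling lam) {j a K y : L} (hj : SupIrred j)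
    (ha : a ⋖ j) (hK : IsGreatest {t | a ≤ t ∧ ¬ j ≤ t} K) (hjy : j ≤ y) (hy : y ≤ K ⊓ y ⊔ j) :
    K ⊓ y ⋖ y ∧ lam (K ⊓ y) y = lam a j := by
  have hjW : ¬ j ≤ K ⊓ y := fun hjW => hK.1.2 (hjW.trans inf_le_left)
  have haW : a ≤ K ⊓ y := le_inf hK.1.1 (ha.le.trans hjy)
  have hWy : K ⊓ y ⋖ y := ⟨inf_le_right.lt_of_ne fun e => hjW (hjy.trans e.ge), fun c hWc hcy =>
    hWc.not_ge (le_inf (hK.2 ⟨haW.trans hWc.le, fun hjc => hcy.not_ge (hy.trans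
      (sup_le hWc.le hjc))⟩) hcy.le)⟩
  refine ⟨hWy, le_antisymm (h.1.label_le_of_supIrred hWy hj ha hjy hjW haW) ?_⟩
  obtain ⟨j', a', hj', ha', hj'y, hj'W, ha'W, hl'⟩ := h.1.exists_supIrred_label_eq hWy
  have hK' : Maximal (fun t => ¬ j ≤ t) K :=
    ⟨hK.1.2, fun t ht hKt => hK.2 ⟨hK.1.1.trans hKt, ht⟩⟩
  calc lam a j = lam K (K ⊔ j) := (h.1.label_sup_eq_of_maximal hj ha hK.1.1 hK').symm
    _ ≤ lam a' j' := h.1.label_le_of_supIrred (covBy_sup_of_maximal hK') hj' ha'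
        (hj'y.trans (hy.trans (sup_le_sup_right inf_le_left _)))
        (fun hj'K => hj'W (le_inf hj'K hj'y)) (ha'W.trans inf_le_left)
    _ = lam (K ⊓ y) y := hl'

lemma exists_lamUp_eq_lamDown (h : IsCULabeling lam) (x : L) :
    ∃ y, lamUp lam x = lamDown lam y := by
  classical
  have := Fintype.ofFinite L
  have : Nonempty L := ⟨x⟩
  let _ := Fintype.toOrderBot L
  choose! j a hj ha hjv hjx hax hl using fun v (hv : x ⋖ v) => h.1.exists_supIrred_label_eq hv
  choose! K hK using fun v (hv : x ⋖ v) => h.exists_isGreatest_not_le (hj v hv) (ha v hv)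
  set V := Finset.univ.filter (x ⋖ ·)
  have hV : ∀ {v}, v ∈ V ↔ x ⋖ v := by simp [V]
  set y := V.sup j
  have hjy : ∀ v, x ⋖ v → j v ≤ y := fun v hv => Finset.le_sup (hV.2 hv)
  have hW : ∀ v, x ⋖ v → K v ⊓ y ⋖ y ∧ lam (K v ⊓ y) y = lam x v := by
    refine fun v hv => (h.inf_covBy_of_isGreatest (hj v hv) (ha v hv) (hK v hv) (hjy v hv)
      (Finset.sup_le fun u hu => ?_)).imp_right (·.trans (hl v hv))
    by_cases huv : u = v
    · exact huv ▸ le_sup_right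
    · exact le_sup_of_le_left (le_inf (le_of_isGreatest_of_le_covBy hv (hV.1 hu) (Ne.symm huv)
        (hjv v hv) (hjx v hv) (hax v hv) (hjv u (hV.1 hu)) (hK v hv)) (hjy u (hV.1 hu)))
  refine ⟨y, Set.Subset.antisymm ?_ ?_⟩
  · rintro _ ⟨v, hv, rfl⟩
    exact ⟨_, (hW v hv).1, (hW v hv).2⟩
  · rintro _ ⟨w, hw, rfl⟩
    obtain ⟨v, hvV, hjw⟩ : ∃ v ∈ V, ¬ j v ≤ w := by
      by_contra! hle
      exact hw.lt.not_ge (Finset.sup_le hle)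
    have hv := hV.1 hvV
    have hwW : w = K v ⊓ y := by_contra fun hne => hjw (h.le_of_label_eq (hW v hv).1 hw
      (Ne.symm hne) (hj v hv) (ha v hv) ((hl v hv).trans (hW v hv).2.symm))
    exact ⟨v, hv, by rw [hwW, (hW v hv).2]⟩

end IsCULabeling

/-- The Kreweras map, sending `x` to the unique `y` with
`λ↑(x) = λ↓(y)`, is a well-defined bijection of the lattice onto itself. -/
theorem kreweras_map_bijective
    {L : Type u} [Lattice L] [Fintype L] {P : Type v} [PartialOrder P]
    (lam : L → L → P) (hlam : IsCULabeling lam) :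
    ∃ Kr : L → L,
      (∀ x : L, lamUp lam x = lamDown lam (Kr x) ∧
        ∀ y : L, lamUp lam x = lamDown lam y → y = Kr x) ∧
      Function.Bijective Kr := by
  choose Kr hKr using hlam.exists_lamUp_eq_lamDown
  refine ⟨Kr, fun x => ⟨hKr x, fun y hy => hlam.lamDown_injective (hy.symm.trans (hKr x))⟩, ?_⟩
  exact Finite.injective_iff_bijective.1 fun x x' h => hlam.lamUp_injective (by rw [hKr, hKr, h])
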